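/- If d = 5 divides p-1, then (4p+1)²/125 ≤ V_4(p) ≤ (52p² + 48p^{3/2} + 24p + 1)/125. -/

import Mathlib

/-!
Let `χ` be the character of order `5` with `χ g = e^{2πi/5}` and `G m` the Gauss sum of `χ ^ m`.
Orthogonality of the characters `χ ^ m` makes `5 η_a` the discrete Fourier transform of `G` on
`ZMod 5`, while `|G 0| = 1` and `|G m| = √p` for `m ≠ 0`. Parseval's identity gives
`Σ |η_a|² = (4p + 1) / 5`, and the lower bound follows by Cauchy–Schwarz. Parseval applied to the
convolution square gives `125 V₄ = Σ_c |(G ⋆ G) c|²`, and the triangle inequality bounds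
`|(G ⋆ G) 0| ≤ 1 + 4p` and `|(G ⋆ G) c| ≤ 2√p + 3p` for `c ≠ 0`.
-/

open Finset ZMod

lemma sum_eq_sum_units_of_map_zero {G₀ M : Type*} [GroupWithZero G₀] [Fintype G₀] [DecidableEq G₀]
    [AddCommMonoid M] (f : G₀ → M) (h0 : f 0 = 0) : ∑ x, f x = ∑ u : G₀ˣ, f u := by
  rw [← sum_filter_of_ne (p := (· ≠ 0)) fun x _ hx ↦ by rintro rfl; exact hx h0,
    sum_subtype _ (p := (· ≠ 0)) (fun x ↦ by simp)]
  exact (Fintype.sum_equiv unitsEquivNeZero _ _ fun u ↦ rfl).symm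

lemma sum_range_eq_sum_zmod {M : Type*} [AddCommMonoid M] (d : ℕ) [NeZero d] (f : ℕ → M) :
    ∑ s ∈ range d, f s = ∑ a : ZMod d, f a.val := by
  obtain ⟨n, rfl⟩ := Nat.exists_eq_succ_of_ne_zero (NeZero.ne d)
  exact (Fin.sum_univ_eq_sum_range f _).symm

section Fourier

variable {N : ℕ} [NeZero N]

def addConv (Φ Ψ : ZMod N → ℂ) (c : ZMod N) : ℂ := ∑ m, Φ m * Ψ (c - m)

lemma star_stdAddChar (x : ZMod N) : starRingEnd ℂ (stdAddChar x) = stdAddChar (-x) := by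
  rw [AddChar.starComp_apply (by simp [ZMod.ringChar_zmod_n, Nat.pos_of_neZero]),
    AddChar.inv_apply]

lemma dft_addConv (Φ Ψ : ZMod N → ℂ) (k : ZMod N) :
    𝓕 (addConv Φ Ψ) k = 𝓕 Φ k * 𝓕 Ψ k := by
  simp only [dft_apply, addConv, smul_eq_mul, mul_sum, sum_mul]
  conv_lhs => rw [sum_comm]
  conv_rhs => rw [sum_comm]
  refine sum_congr rfl fun m _ ↦ Fintype.sum_equiv (Equiv.subRight m) _ _ fun c ↦ ?_
  rw [Equiv.subRight_apply, show -(c * k) = -(m * k) + -((c - m) * k) by ring,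
    AddChar.map_add_eq_mul]
  ring

lemma sum_norm_sq_dft (Φ : ZMod N → ℂ) : ∑ k, ‖𝓕 Φ k‖ ^ 2 = N * ∑ j, ‖Φ j‖ ^ 2 := by
  apply Complex.ofReal_injective
  simp only [Complex.ofReal_sum, Complex.ofReal_mul, Complex.ofReal_natCast, Complex.ofReal_pow,
    ← Complex.mul_conj', dft_apply, smul_eq_mul, map_sum, map_mul, star_stdAddChar, neg_neg,
    sum_mul, mul_sum]
  rw [sum_comm]
  refine sum_congr rfl fun j _ ↦ ?_
  calc _ = ∑ i, Φ i * starRingEnd ℂ (Φ j) * ∑ k, stdAddChar (k * (j - i)) := by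
        rw [sum_comm]
        refine sum_congr rfl fun i _ ↦ ?_
        rw [mul_sum]
        refine sum_congr rfl fun k _ ↦ ?_
        rw [show k * (j - i) = -(i * k) + j * k by ring, AddChar.map_add_eq_mul]
        ring
    _ = _ := by
        simp only [AddChar.sum_mulShift _ (isPrimitive_stdAddChar N), sub_eq_zero, ZMod.card]
        simp [mul_comm]

lemma sum_norm_pow_four_dft (Φ : ZMod N → ℂ) :
    ∑ k, ‖𝓕 Φ k‖ ^ 4 = N * ∑ c, ‖addConv Φ Φ c‖ ^ 2 := by
  rw [← sum_norm_sq_dft]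
  simp only [dft_addConv, norm_mul]
  ring_nf

end Fourier

section GaussSum

variable {F : Type*} [Field F] [Fintype F]

lemma star_gaussSum (χ : MulChar F ℂ) (ψ : AddChar F ℂ) :
    starRingEnd ℂ (gaussSum χ ψ) = gaussSum χ⁻¹ ψ⁻¹ := by
  have hchar : 0 < ringChar F := Nat.pos_of_ne_zero (CharP.ringChar_ne_zero_of_finite F)
  simp only [gaussSum, map_sum, map_mul, AddChar.starComp_apply hchar]
  simp [← MulChar.star_apply']

lemma norm_sq_gaussSum {χ : MulChar F ℂ} (hχ : χ ≠ 1) {ψ : AddChar F ℂ} (hψ : ψ.IsPrimitive) :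
    ‖gaussSum χ ψ‖ ^ 2 = Fintype.card F := by
  apply Complex.ofReal_injective
  rw [Complex.ofReal_pow, ← Complex.mul_conj', star_gaussSum, gaussSum_mul_gaussSum_eq_card hχ hψ]
  simp

lemma norm_gaussSum_one {ψ : AddChar F ℂ} (hψ : ψ.IsPrimitive) :
    ‖gaussSum (1 : MulChar F ℂ) ψ‖ = 1 := by
  rw [gaussSum_one_left (by simpa using hψ one_ne_zero), norm_neg, norm_one]

end GaussSum

section PowerResidue

variable {F : Type*} [Field F] {g : Fˣ} (hg : ∀ x, x ∈ Subgroup.zpowers g)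
  {d : ℕ} (hd : d ∣ orderOf g)

noncomputable def discreteLogMod : Fˣ →* Multiplicative (ZMod d) :=
  monoidHomOfForallMemZpowers hg (g' := Multiplicative.ofAdd 1)
    (by rwa [orderOf_ofAdd_eq_addOrderOf, ZMod.addOrderOf_one])

lemma discreteLogMod_gen : discreteLogMod hg hd g = Multiplicative.ofAdd 1 :=
  monoidHomOfForallMemZpowers_apply_gen hg _

lemma discreteLogMod_pow (t : ℕ) :
    discreteLogMod hg hd (g ^ t) = Multiplicative.ofAdd (t : ZMod d) := by
  rw [map_pow, discreteLogMod_gen, ← ofAdd_nsmul, nsmul_one]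

variable [NeZero d]

noncomputable def powerResidueChar (m : ZMod d) : MulChar F ℂ :=
  MulChar.ofUnitHom ((stdAddChar.mulShift m).toMonoidHom.comp (discreteLogMod hg hd)).toHomUnits

lemma powerResidueChar_coe (m : ZMod d) (u : Fˣ) :
    powerResidueChar hg hd m u = stdAddChar (m * (discreteLogMod hg hd u).toAdd) := by
  simp [powerResidueChar, AddChar.mulShift_apply]

lemma powerResidueChar_eq_one_iff {m : ZMod d} : powerResidueChar hg hd m = 1 ↔ m = 0 := by
  rw [MulChar.eq_one_iff]
  constructor
  · intro h
    have hg1 := h g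
    rw [powerResidueChar_coe, discreteLogMod_gen, ← AddChar.map_zero_eq_one (stdAddChar (N := d)),
      injective_stdAddChar.eq_iff] at hg1
    simpa using hg1
  · rintro rfl u
    rw [powerResidueChar_coe, zero_mul, AddChar.map_zero_eq_one]

variable [Fintype F]

lemma norm_gaussSum_powerResidueChar {ψ : AddChar F ℂ} (hψ : ψ.IsPrimitive) (m : ZMod d) :
    ‖gaussSum (powerResidueChar hg hd m) ψ‖ = if m = 0 then 1 else √(Fintype.card F) := by
  split_ifs with hm
  · rw [(powerResidueChar_eq_one_iff hg hd).mpr hm, norm_gaussSum_one hψ]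
  · rw [← norm_sq_gaussSum ((powerResidueChar_eq_one_iff hg hd).not.mpr hm) hψ,
      Real.sqrt_sq (norm_nonneg _)]

lemma sum_norm_sq_gaussSum_powerResidueChar {ψ : AddChar F ℂ} (hψ : ψ.IsPrimitive) :
    ∑ m, ‖gaussSum (powerResidueChar hg hd m) ψ‖ ^ 2 = 1 + ((d : ℝ) - 1) * Fintype.card F := by
  rw [Fintype.sum_eq_add_sum_compl 0, sum_congr rfl fun m hm ↦ by
    rw [norm_gaussSum_powerResidueChar hg hd hψ, if_neg (by simpa using hm)]]
  rw [norm_gaussSum_powerResidueChar hg hd hψ, if_pos rfl, sum_const, card_compl, ZMod.card,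
    card_singleton, nsmul_eq_mul, Real.sq_sqrt (Nat.cast_nonneg _),
    Nat.cast_sub NeZero.one_le]
  norm_num

variable [DecidableEq F]

noncomputable def gaussianPeriod (ψ : AddChar F ℂ) (a : ZMod d) : ℂ :=
  ∑ u with (discreteLogMod hg hd u).toAdd = a, ψ u

lemma dft_gaussSum_powerResidueChar (ψ : AddChar F ℂ) (a : ZMod d) :
    𝓕 (fun m ↦ gaussSum (powerResidueChar hg hd m) ψ) a = d * gaussianPeriod hg hd ψ a := by
  have hsum (m : ZMod d) : gaussSum (powerResidueChar hg hd m) ψ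
      = ∑ u : Fˣ, stdAddChar (m * (discreteLogMod hg hd u).toAdd) * ψ u := by
    rw [gaussSum, sum_eq_sum_units_of_map_zero _ (by rw [MulChar.map_zero, zero_mul])]
    simp only [powerResidueChar_coe]
  simp only [dft_apply, hsum, smul_eq_mul, mul_sum, gaussianPeriod, sum_filter]
  rw [sum_comm]
  refine sum_congr rfl fun u _ ↦ ?_
  calc ∑ m, stdAddChar (-(m * a)) * (stdAddChar (m * (discreteLogMod hg hd u).toAdd) * ψ u)
      = (∑ m, stdAddChar (m * ((discreteLogMod hg hd u).toAdd - a))) * ψ u := by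
        rw [sum_mul]
        refine sum_congr rfl fun m _ ↦ ?_
        rw [mul_sub, sub_eq_neg_add, AddChar.map_add_eq_mul]
        ring
    _ = _ := by
        simp only [AddChar.sum_mulShift _ (isPrimitive_stdAddChar d), sub_eq_zero, ZMod.card]
        split_ifs <;> simp

lemma gaussianPeriod_eq_sum_range {k : ℕ} (hk : orderOf g = d * k) (ψ : AddChar F ℂ)
    (a : ZMod d) : gaussianPeriod hg hd ψ a = ∑ j ∈ range k, ψ ↑(g ^ (d * j + a.val)) := by
  symm
  refine sum_bij (fun j _ ↦ g ^ (d * j + a.val)) (fun j _ ↦ ?_) (fun i hi j hj hij ↦ ?_)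
    (fun u hu ↦ ?_) fun _ _ ↦ rfl
  · simp [discreteLogMod_pow]
  · have hlt (j : ℕ) (hj : j ∈ range k) : d * j + a.val < orderOf g := by
      rw [hk]; have := a.val_lt; simp only [mem_range] at hj; nlinarith
    have := pow_injOn_Iio_orderOf (hlt i hi) (hlt j hj) hij
    simp only [mul_comm d, add_left_inj] at this
    exact Nat.eq_of_mul_eq_mul_right (Nat.pos_of_neZero d) this
  · obtain ⟨t, rfl⟩ := mem_powers_iff_mem_zpowers.mpr (hg u)
    replace hu : (discreteLogMod hg hd (g ^ t)).toAdd = a := by simpa using hu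
    dsimp only
    rw [← pow_mod_orderOf] at hu ⊢
    set t' := t % orderOf g
    have ht' : t' < d * k := hk ▸ Nat.mod_lt _ (orderOf_pos g)
    rw [discreteLogMod_pow, toAdd_ofAdd] at hu
    have hmod : t' % d = a.val := by rw [← hu, ZMod.val_natCast]
    refine ⟨t' / d, mem_range.mpr (Nat.div_lt_of_lt_mul ht'), ?_⟩
    rw [← hmod, Nat.div_add_mod]

lemma sum_norm_sq_gaussianPeriod {ψ : AddChar F ℂ} (hψ : ψ.IsPrimitive) :
    d * ∑ a, ‖gaussianPeriod hg hd ψ a‖ ^ 2 = 1 + ((d : ℝ) - 1) * Fintype.card F := by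
  have h := sum_norm_sq_dft fun m ↦ gaussSum (powerResidueChar hg hd m) ψ
  simp only [dft_gaussSum_powerResidueChar, norm_mul, Complex.norm_natCast, mul_pow,
    ← mul_sum, sum_norm_sq_gaussSum_powerResidueChar hg hd hψ] at h
  apply mul_left_cancel₀ (NeZero.ne (d : ℝ))
  linear_combination h

lemma sum_norm_pow_four_gaussianPeriod (ψ : AddChar F ℂ) :
    d ^ 3 * ∑ a, ‖gaussianPeriod hg hd ψ a‖ ^ 4 =
      ∑ c, ‖addConv (fun m ↦ gaussSum (powerResidueChar hg hd m) ψ)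
        (fun m ↦ gaussSum (powerResidueChar hg hd m) ψ) c‖ ^ 2 := by
  have h := sum_norm_pow_four_dft fun m ↦ gaussSum (powerResidueChar hg hd m) ψ
  simp only [dft_gaussSum_powerResidueChar, norm_mul, Complex.norm_natCast, mul_pow,
    ← mul_sum] at h
  apply mul_left_cancel₀ (NeZero.ne (d : ℝ))
  linear_combination h

lemma sq_le_sum_norm_pow_four_gaussianPeriod {ψ : AddChar F ℂ} (hψ : ψ.IsPrimitive) :
    (1 + ((d : ℝ) - 1) * Fintype.card F) ^ 2 ≤ d ^ 3 * ∑ a, ‖gaussianPeriod hg hd ψ a‖ ^ 4 := by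
  have hcs := sq_sum_le_card_mul_sum_sq (s := univ)
    (f := fun a ↦ ‖gaussianPeriod hg hd ψ a‖ ^ 2)
  simp only [card_univ, ZMod.card, ← pow_mul] at hcs
  rw [← sum_norm_sq_gaussianPeriod hg hd hψ]
  calc _ = (d : ℝ) ^ 2 * (∑ a, ‖gaussianPeriod hg hd ψ a‖ ^ 2) ^ 2 := by ring
    _ ≤ (d : ℝ) ^ 2 * (d * ∑ a, ‖gaussianPeriod hg hd ψ a‖ ^ 4) := by gcongr
    _ = _ := by ring

end PowerResidue

lemma sum_norm_sq_addConv_self_le (A : ZMod 5 → ℂ) (s : ℝ)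
    (hA : ∀ m, ‖A m‖ = if m = 0 then 1 else s) :
    ∑ c, ‖addConv A A c‖ ^ 2 ≤ (1 + 4 * s ^ 2) ^ 2 + 4 * (2 * s + 3 * s ^ 2) ^ 2 := by
  have hprofile : ∑ c : ZMod 5, (∑ m, ‖A m‖ * ‖A (c - m)‖) ^ 2
      = (1 + 4 * s ^ 2) ^ 2 + 4 * (2 * s + 3 * s ^ 2) ^ 2 := by
    have huniv : (univ : Finset (ZMod 5)) = {0, 1, 2, 3, 4} := by decide
    simp only [hA, huniv]
    simp +decide
    ring
  refine hprofile ▸ sum_le_sum fun c _ ↦ pow_le_pow_left₀ (norm_nonneg _) ?_ 2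
  exact (norm_sum_le _ _).trans_eq (by simp only [norm_mul])

lemma sum_norm_pow_four_gaussianPeriod_le {F : Type*} [Field F] [Fintype F] [DecidableEq F]
    {g : Fˣ} (hg : ∀ x, x ∈ Subgroup.zpowers g) (hd : 5 ∣ orderOf g) {ψ : AddChar F ℂ}
    (hψ : ψ.IsPrimitive) :
    125 * ∑ a, ‖gaussianPeriod hg hd ψ a‖ ^ 4 ≤
      52 * (Fintype.card F : ℝ) ^ 2 + 48 * (Fintype.card F : ℝ) ^ ((3 : ℝ) / 2) +
        24 * Fintype.card F + 1 := by
  set q : ℝ := (Fintype.card F : ℝ)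
  have h := (sum_norm_pow_four_gaussianPeriod hg hd ψ).trans_le
    (sum_norm_sq_addConv_self_le _ √q (norm_gaussSum_powerResidueChar hg hd hψ))
  have hsq : √q ^ 2 = q := Real.sq_sqrt (Nat.cast_nonneg _)
  have hcube : √q ^ 3 = q ^ ((3 : ℝ) / 2) := by
    rw [show (3 : ℝ) / 2 = 1 / 2 * 3 by norm_num, Real.rpow_mul (Nat.cast_nonneg _),
      ← Real.sqrt_eq_rpow]
    norm_cast
  rw [← hcube]
  linear_combination h + (52 * (√q ^ 2 + q) + 24) * hsq

theorem gaussian_periods_V4_d5_bounds_general (p k : ℕ) (hp : p.Prime)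
    (hk : p - 1 = 5 * k)
    (g : (ZMod p)ˣ) (hg : ∀ x : (ZMod p)ˣ, x ∈ Subgroup.zpowers g)
    (η : ℕ → ℂ)
    (hη : ∀ a : ℕ, η a = ∑ j ∈ Finset.range k,
      Complex.exp (2 * (Real.pi : ℂ) * Complex.I *
        (((g ^ (5 * j + a) : (ZMod p)ˣ) : ZMod p).val : ℂ) / (p : ℂ))) :
    (4 * (p : ℝ) + 1) ^ 2 / 125
      ≤ ∑ s ∈ Finset.range 5, ‖η s‖ ^ 4 ∧
    ∑ s ∈ Finset.range 5, ‖η s‖ ^ 4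
      ≤ (52 * (p : ℝ) ^ 2 + 48 * (p : ℝ) ^ ((3 : ℝ) / 2) + 24 * p + 1) / 125 := by
  have := Fact.mk hp
  have horder : orderOf g = 5 * k := by
    rw [orderOf_eq_card_of_forall_mem_zpowers hg, Nat.card_eq_fintype_card, ZMod.card_units, hk]
  have hd : 5 ∣ orderOf g := horder ▸ dvd_mul_right 5 k
  have hψ := isPrimitive_stdAddChar p
  have hperiod (a : ZMod 5) : η a.val = gaussianPeriod hg hd stdAddChar a := by
    rw [gaussianPeriod_eq_sum_range hg hd horder, hη]
    simp [stdAddChar_apply, toCircle_apply]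
  simp only [sum_range_eq_sum_zmod 5, hperiod]
  have hlow := sq_le_sum_norm_pow_four_gaussianPeriod hg hd hψ
  have hup := sum_norm_pow_four_gaussianPeriod_le hg hd hψ
  rw [ZMod.card] at hlow hup
  norm_num at hlow
  constructor <;> linarith

/-- If `d = 5` divides `p-1`, then
`(4p+1)²/125 ≤ V₄(p) ≤ (52p² + 48p^{3/2} + 24p + 1)/125`. -/
theorem gaussian_periods_V4_d5_bounds (p k : ℕ) (hp : p.Prime) (hodd : Odd p)
    (hk : p - 1 = 5 * k)
    (g : (ZMod p)ˣ) (hg : ∀ x : (ZMod p)ˣ, x ∈ Subgroup.zpowers g)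
    (η : ℕ → ℂ)
    (hη : ∀ a : ℕ, η a = ∑ j ∈ Finset.range k,
      Complex.exp (2 * (Real.pi : ℂ) * Complex.I *
        (((g ^ (5 * j + a) : (ZMod p)ˣ) : ZMod p).val : ℂ) / (p : ℂ))) :
    (4 * (p : ℝ) + 1) ^ 2 / 125
      ≤ ∑ s ∈ Finset.range 5, ‖η s‖ ^ 4 ∧
    ∑ s ∈ Finset.range 5, ‖η s‖ ^ 4
      ≤ (52 * (p : ℝ) ^ 2 + 48 * (p : ℝ) ^ ((3 : ℝ) / 2) + 24 * p + 1) / 125 :=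
  gaussian_periods_V4_d5_bounds_general p k hp hk g hg η hη
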